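/- arXiv:math/0612468 — 4 statements merged into one kernel-verified Lean document; each statement's English description precedes it below -/
import Mathlib

section
/- Let T be a triad of edges (three pairwise non-collinear, i.e. pairwise intersecting, distinct edges). Then |T^⊥| = 1 or |T^⊥| = 3; moreover |T^⊥| = 3 if and only if T is a complete triad, and |T^⊥| = 1 if and only if T is an incomplete triad. In addition, any two distinct non-collinear edges are contained in a unique complete triad. -/
/- Common setup: the generalized quadrangle of order (2,2) on the edges of a
   6-element set, the near hexagon 𝓢 = ℍ₃, and the near hexagon 𝕊 = DSp(6,2). -/

/-- An edge: a 2-element subset of `Fin 6`. -/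
abbrev Edge : Type := {e : Finset (Fin 6) // e.card = 2}

/-- `perp A` is `A^⊥`: the set of edges equal to or disjoint from every element of `A`. -/
def perp (A : Set Edge) : Set Edge := {y | ∀ x ∈ A, x = y ∨ Disjoint x.1 y.1}

/-- A factor: a set of three pairwise disjoint edges (a perfect matching of `Fin 6`). -/
def IsFactor (T : Set Edge) : Prop :=
  T.ncard = 3 ∧ T.Pairwise (fun x y => Disjoint x.1 y.1)

/-- A triad: a set of three pairwise non-collinear (i.e. pairwise intersecting) distinct
    edges. -/
def IsTriad (T : Set Edge) : Prop :=
  T.ncard = 3 ∧ T.Pairwise (fun x y => ¬ Disjoint x.1 y.1)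

/-- A complete triad: a triad not contained in a set of four pairwise non-collinear edges. -/
def IsCompleteTriad (T : Set Edge) : Prop :=
  IsTriad T ∧
    ¬ ∃ U : Set Edge, T ⊆ U ∧ U.ncard = 4 ∧ U.Pairwise (fun x y => ¬ Disjoint x.1 y.1)

/-- The point set 𝓟 of 𝓢 : pairs `(x,u)` of edges with `x = u` or `x ∩ u = ∅`. -/
def NPoint : Type := {p : Edge × Edge // p.1 = p.2 ∨ Disjoint p.1.1 p.2.1}

/-- The lines 𝓛 of 𝓢 : sets `{(x, σ x) : x ∈ T}` where `T` is a factor or a complete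
    triad and `σ : T → T^⊥` is a bijection. -/
def IsLine (L : Set NPoint) : Prop :=
  ∃ (T : Set Edge) (σ : Edge → Edge),
    (IsFactor T ∨ IsCompleteTriad T) ∧ Set.BijOn σ T (perp T) ∧
    L = {p : NPoint | p.1.1 ∈ T ∧ p.1.2 = σ p.1.1}

/-- The collinearity graph of 𝓢. -/
def NG : SimpleGraph NPoint where
  Adj α β := α ≠ β ∧ ∃ L, IsLine L ∧ α ∈ L ∧ β ∈ L
  symm := ⟨fun _ _ ⟨h, L, hL, ha, hb⟩ => ⟨h.symm, L, hL, hb, ha⟩⟩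
  loopless := ⟨fun _ h => h.1 rfl⟩

/-- The point set ℙ of 𝕊 : the disjoint union 𝓟 ⊔ P ⊔ P' where `P` and `P'` are two
    copies of the edge set. -/
def BPoint : Type := NPoint ⊕ Edge ⊕ Edge

/-- Embedding of 𝓟 into ℙ. -/
def inS (p : NPoint) : BPoint := Sum.inl p

/-- Embedding of the first copy `P` of the edge set into ℙ (an edge `x` gives `x ∈ P`). -/
def inP (x : Edge) : BPoint := Sum.inr (Sum.inl x)

/-- Embedding of the second copy `P'` of the edge set into ℙ (an edge `u` gives `u' ∈ P'`). -/
def inP' (u : Edge) : BPoint := Sum.inr (Sum.inr u)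

/-- The lines 𝕃 of 𝕊 : the lines of 𝓛 together with the lines `{x, (x,u), u'}`
    for `(x,u) ∈ 𝓟` (the latter being the lines of type `𝕃₁`). -/
def IsBLine (L : Set BPoint) : Prop :=
  (∃ L₀ : Set NPoint, IsLine L₀ ∧ L = inS '' L₀) ∨
  (∃ p : NPoint, L = {inP p.1.1, inS p, inP' p.1.2})

/-- The collinearity graph of 𝕊. -/
def BG : SimpleGraph BPoint where
  Adj α β := α ≠ β ∧ ∃ L, IsBLine L ∧ α ∈ L ∧ β ∈ L
  symm := ⟨fun _ _ ⟨h, L, hL, ha, hb⟩ => ⟨h.symm, L, hL, hb, ha⟩⟩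
  loopless := ⟨fun _ h => h.1 rfl⟩

/-!
Three pairwise intersecting edges either share a point, forming a star `{ab, ac, ad}`, or form
a triangle `{ab, ac, bc}`. An edge of `T^⊥` cannot belong to `T`, so `T^⊥` consists of the edges
avoiding the 3 or 4 points covered by `T`: there are `C(3,2) = 3` of them for a triangle and
`C(2,2) = 1` for a star. A star `{ab, ac, ad}` extends by `ae` to four pairwise intersecting
edges, whereas an edge meeting all sides of a triangle is a side. Hence the complete triads are
the triangles, and intersecting edges `ab, ac` lie in exactly one of them, `{ab, ac, bc}`.
-/

namespace Finset

variable {α : Type*} [DecidableEq α] {s t u : Finset α} {a b c : α}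

theorem exists_eq_pair_of_mem (hs : #s = 2) (ha : a ∈ s) : ∃ b, a ≠ b ∧ s = {a, b} := by
  obtain ⟨b, hb⟩ := card_eq_one.mp (by rw [card_erase_of_mem ha, hs] : #(s.erase a) = 1)
  refine ⟨b, fun hab => ?_, by rw [← insert_erase ha, hb]⟩
  simpa [hab] using hb.symm.subset (mem_singleton_self b)

theorem eq_pair_of_mem_of_mem (hs : #s = 2) (ha : a ∈ s) (hb : b ∈ s) (hab : a ≠ b) :
    s = {a, b} :=
  (eq_of_subset_of_card_le (by simp [insert_subset_iff, ha, hb]) (by rw [hs, card_pair hab])).symm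

theorem exists_eq_pair_pair_of_not_disjoint (hs : #s = 2) (ht : #t = 2) (hst : s ≠ t)
    (h : ¬Disjoint s t) : ∃ a b c, a ≠ b ∧ a ≠ c ∧ b ≠ c ∧ s = {a, b} ∧ t = {a, c} := by
  obtain ⟨a, has, hat⟩ := not_disjoint_iff.mp h
  obtain ⟨b, hab, rfl⟩ := exists_eq_pair_of_mem hs has
  obtain ⟨c, hac, rfl⟩ := exists_eq_pair_of_mem ht hat
  exact ⟨a, b, c, hab, hac, fun hbc => hst (hbc ▸ rfl), rfl, rfl⟩

theorem eq_pair_or_exists_eq_pair_of_not_disjoint (hu : #u = 2) (hbc : b ≠ c)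
    (hub : u ≠ {a, b}) (huc : u ≠ {a, c}) (hb : ¬Disjoint {a, b} u) (hc : ¬Disjoint {a, c} u) :
    u = {b, c} ∨ ∃ d, u = {a, d} ∧ d ≠ a ∧ d ≠ b ∧ d ≠ c := by
  by_cases ha : a ∈ u
  · obtain ⟨d, had, rfl⟩ := exists_eq_pair_of_mem hu ha
    exact Or.inr ⟨d, rfl, had.symm, fun h => hub (h ▸ rfl), fun h => huc (h ▸ rfl)⟩
  · simp only [disjoint_insert_left, disjoint_singleton_left, ha, not_false_eq_true, true_and,
      not_not] at hb hc
    exact Or.inl (eq_pair_of_mem_of_mem hu hb hc hbc)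

theorem eq_side_of_not_disjoint_sides (hu : #u = 2) (hab : a ≠ b) (hac : a ≠ c) (hbc : b ≠ c)
    (h₁ : ¬Disjoint {a, b} u) (h₂ : ¬Disjoint {a, c} u) (h₃ : ¬Disjoint {b, c} u) :
    u = {a, b} ∨ u = {a, c} ∨ u = {b, c} := by
  by_cases ha : a ∈ u <;> by_cases hb : b ∈ u
  · exact Or.inl (eq_pair_of_mem_of_mem hu ha hb hab)
  · have hc : c ∈ u := by simpa [hb] using h₃
    exact Or.inr (Or.inl (eq_pair_of_mem_of_mem hu ha hc hac))
  · have hc : c ∈ u := by simpa [ha] using h₂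
    exact Or.inr (Or.inr (eq_pair_of_mem_of_mem hu hb hc hbc))
  · simp [ha, hb] at h₁

theorem ncard_setOf_disjoint_card_eq_two [Fintype α] (s : Finset α) :
    {e : {e : Finset α // #e = 2} | Disjoint s e.1}.ncard = (#sᶜ).choose 2 := by
  rw [← Set.ncard_image_of_injective _ Subtype.val_injective, ← card_powersetCard,
    ← Set.ncard_coe_finset]
  congr 1
  ext e
  simp [mem_powersetCard, subset_compl_iff_disjoint_left, and_comm]

end Finset

theorem Set.exists_eq_triple_of_ncard_eq_three {α : Type*} {s : Set α} {x y : α}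
    (hs : s.ncard = 3) (hx : x ∈ s) (hy : y ∈ s) (hxy : x ≠ y) :
    ∃ z, z ≠ x ∧ z ≠ y ∧ s = {x, y, z} := by
  have hxys : {x, y} ⊆ s := insert_subset_iff.mpr ⟨hx, singleton_subset_iff.mpr hy⟩
  have hrest : (s \ {x, y}).ncard = 1 := by rw [ncard_sdiff hxys, hs, ncard_pair hxy]
  obtain ⟨z, hz⟩ := ncard_eq_one.mp hrest
  have hzs : z ∈ s \ {x, y} := hz ▸ mem_singleton z
  refine ⟨z, fun h => hzs.2 (by simp [h]), fun h => hzs.2 (by simp [h]), ?_⟩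
  rw [← union_sdiff_cancel hxys, hz, insert_union, singleton_union]

theorem perp_eq_setOf_disjoint {T : Set Edge} (hT : T.Pairwise (fun x y => ¬Disjoint x.1 y.1))
    (hnt : T.Nontrivial) : perp T = {y | ∀ x ∈ T, Disjoint x.1 y.1} := by
  ext y
  refine ⟨fun hy x hx => (hy x hx).resolve_left ?_, fun hy x hx => Or.inr (hy x hx)⟩
  rintro rfl
  obtain ⟨x', hx', hne⟩ := hnt.exists_ne x
  exact (hy x' hx').elim hne (hT hx' hx hne)

theorem IsTriad.perp_eq {T : Set Edge} (hT : IsTriad T) :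
    perp T = {y | ∀ x ∈ T, Disjoint x.1 y.1} :=
  perp_eq_setOf_disjoint hT.2 (Set.one_lt_ncard_iff_nontrivial.mp (by rw [hT.1]; norm_num))

theorem IsTriad.ncard_perp_eq_choose {x y z : Edge} (hT : IsTriad {x, y, z}) :
    (perp {x, y, z}).ncard = (x.1 ∪ y.1 ∪ z.1)ᶜ.card.choose 2 := by
  rw [hT.perp_eq, ← Finset.ncard_setOf_disjoint_card_eq_two]
  congr 1
  ext w
  simp [Finset.disjoint_union_left]

theorem IsTriad.exists_triangle_or_star {T : Set Edge} (hT : IsTriad T) :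
    ∃ (x y z : Edge) (a b c : Fin 6), T = {x, y, z} ∧ a ≠ b ∧ a ≠ c ∧ b ≠ c ∧
      x.1 = {a, b} ∧ y.1 = {a, c} ∧
      (z.1 = {b, c} ∨ ∃ d, z.1 = {a, d} ∧ d ≠ a ∧ d ≠ b ∧ d ≠ c) := by
  obtain ⟨x, y, z, hxy, hxz, hyz, rfl⟩ := Set.ncard_eq_three.mp hT.1
  have meet {u v : Edge} (hu : u ∈ ({x, y, z} : Set Edge)) (hv : v ∈ ({x, y, z} : Set Edge))
      (huv : u ≠ v) : ¬Disjoint u.1 v.1 := hT.2 hu hv huv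
  obtain ⟨a, b, c, hab, hac, hbc, hx, hy⟩ := Finset.exists_eq_pair_pair_of_not_disjoint x.2 y.2
    (Subtype.coe_injective.ne hxy) (meet (by simp) (by simp) hxy)
  refine ⟨x, y, z, a, b, c, rfl, hab, hac, hbc, hx, hy, ?_⟩
  exact Finset.eq_pair_or_exists_eq_pair_of_not_disjoint z.2 hbc
    (hx ▸ Subtype.coe_injective.ne hxz.symm) (hy ▸ Subtype.coe_injective.ne hyz.symm)
    (hx ▸ meet (by simp) (by simp) hxz) (hy ▸ meet (by simp) (by simp) hyz)

section Triangle

variable {x y z : Edge} {a b c : Fin 6}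

theorem isTriad_of_triangle (hab : a ≠ b) (hac : a ≠ c) (hbc : b ≠ c) (hx : x.1 = {a, b})
    (hy : y.1 = {a, c}) (hz : z.1 = {b, c}) : IsTriad {x, y, z} := by
  have ne {u v : Edge} {p : Fin 6} (hu : p ∈ u.1) (hv : p ∉ v.1) : u ≠ v := fun h => hv (h ▸ hu)
  refine ⟨Set.ncard_eq_three.mpr ⟨x, y, z, ?_, ?_, ?_, rfl⟩, ?_⟩
  · exact ne (p := b) (by simp [hx]) (by simp [hy, hab.symm, hbc])
  · exact ne (p := a) (by simp [hx]) (by simp [hz, hab, hac])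
  · exact ne (p := a) (by simp [hy]) (by simp [hz, hab, hac])
  · simp [Set.pairwise_insert, hx, hy, hz, hab, hac, hbc, hab.symm, hbc.symm]

theorem isCompleteTriad_of_triangle (hab : a ≠ b) (hac : a ≠ c) (hbc : b ≠ c) (hx : x.1 = {a, b})
    (hy : y.1 = {a, c}) (hz : z.1 = {b, c}) : IsCompleteTriad {x, y, z} := by
  refine ⟨isTriad_of_triangle hab hac hbc hx hy hz, ?_⟩
  rintro ⟨U, hTU, hU, hUp⟩
  obtain ⟨w, hwU, hwT⟩ := Set.exists_mem_notMem_of_ncard_lt_ncard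
    (by rw [hU, (isTriad_of_triangle hab hac hbc hx hy hz).1]; norm_num) (Set.toFinite {x, y, z})
  have meet {v : Edge} (hv : v ∈ ({x, y, z} : Set Edge)) : ¬Disjoint v.1 w.1 :=
    hUp (hTU hv) hwU fun h => hwT (h ▸ hv)
  rcases Finset.eq_side_of_not_disjoint_sides w.2 hab hac hbc (hx ▸ meet (by simp))
    (hy ▸ meet (by simp)) (hz ▸ meet (by simp)) with hw | hw | hw
  · exact hwT (Or.inl (Subtype.ext (hw.trans hx.symm)))
  · exact hwT (Or.inr (Or.inl (Subtype.ext (hw.trans hy.symm))))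
  · exact hwT (Or.inr (Or.inr (Subtype.ext (hw.trans hz.symm))))

theorem ncard_perp_of_triangle (hab : a ≠ b) (hac : a ≠ c) (hbc : b ≠ c) (hx : x.1 = {a, b})
    (hy : y.1 = {a, c}) (hz : z.1 = {b, c}) : (perp {x, y, z}).ncard = 3 := by
  rw [(isTriad_of_triangle hab hac hbc hx hy hz).ncard_perp_eq_choose, hx, hy, hz,
    show ({a, b} ∪ {a, c} ∪ {b, c} : Finset (Fin 6)) = {a, b, c} by ext; simp,
    Finset.card_compl, Finset.card_eq_three.mpr ⟨a, b, c, hab, hac, hbc, rfl⟩]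
  rfl

end Triangle

section Star

variable {x y z : Edge} {a b c d : Fin 6}

theorem not_isCompleteTriad_of_star (hT : IsTriad {x, y, z}) (hx : x.1 = {a, b})
    (hy : y.1 = {a, c}) (hz : z.1 = {a, d}) : ¬IsCompleteTriad {x, y, z} := by
  obtain ⟨e, -, he⟩ := Finset.exists_mem_notMem_of_card_lt_card
    (Finset.card_le_four.trans_lt (by simp) :
      ({a, b, c, d} : Finset (Fin 6)).card < Finset.univ.card)
  have hae : a ≠ e := fun h => he (by simp [h])
  let w : Edge := ⟨{a, e}, Finset.card_pair hae⟩
  have hw : w ∉ ({x, y, z} : Set Edge) := by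
    have he' : ∀ v ∈ ({x, y, z} : Set Edge), e ∉ v.1 := by simp_all
    exact fun h => he' w h (by simp [w])
  rintro ⟨-, hmax⟩
  refine hmax ⟨insert w {x, y, z}, Set.subset_insert _ _, by
    rw [Set.ncard_insert_of_notMem hw, hT.1], fun u hu v hv _ => ?_⟩
  have ha : ∀ v ∈ (insert w {x, y, z} : Set Edge), a ∈ v.1 := by simp [w, hx, hy, hz]
  exact Finset.not_disjoint_iff.mpr ⟨a, ha u hu, ha v hv⟩

theorem ncard_perp_of_star (hT : IsTriad {x, y, z}) (hx : x.1 = {a, b})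
    (hy : y.1 = {a, c}) (hz : z.1 = {a, d}) (hab : a ≠ b) (hac : a ≠ c) (had : a ≠ d)
    (hbc : b ≠ c) (hbd : b ≠ d) (hcd : c ≠ d) : (perp {x, y, z}).ncard = 1 := by
  rw [hT.ncard_perp_eq_choose, hx, hy, hz,
    show ({a, b} ∪ {a, c} ∪ {a, d} : Finset (Fin 6)) = {a, b, c, d} by ext; simp,
    Finset.card_compl, Finset.card_eq_four.mpr ⟨a, b, c, d, hab, hac, had, hbc, hbd, hcd, rfl⟩]
  rfl

end Star

theorem IsTriad.isCompleteTriad_and_ncard_perp {T : Set Edge} (hT : IsTriad T) :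
    (IsCompleteTriad T ∧ (perp T).ncard = 3) ∨ (¬IsCompleteTriad T ∧ (perp T).ncard = 1) := by
  obtain ⟨x, y, z, a, b, c, rfl, hab, hac, hbc, hx, hy, hz | ⟨d, hz, hda, hdb, hdc⟩⟩ :=
    hT.exists_triangle_or_star
  · exact Or.inl ⟨isCompleteTriad_of_triangle hab hac hbc hx hy hz,
      ncard_perp_of_triangle hab hac hbc hx hy hz⟩
  · exact Or.inr ⟨not_isCompleteTriad_of_star hT hx hy hz,
      ncard_perp_of_star hT hx hy hz hab hac hda.symm hbc hdb.symm hdc.symm⟩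

theorem existsUnique_isCompleteTriad {x y : Edge} (hxy : x ≠ y) (h : ¬Disjoint x.1 y.1) :
    ∃! T, IsCompleteTriad T ∧ x ∈ T ∧ y ∈ T := by
  obtain ⟨a, b, c, hab, hac, hbc, hx, hy⟩ :=
    Finset.exists_eq_pair_pair_of_not_disjoint x.2 y.2 (Subtype.coe_injective.ne hxy) h
  let z : Edge := ⟨{b, c}, Finset.card_pair hbc⟩
  refine ⟨{x, y, z}, ⟨isCompleteTriad_of_triangle hab hac hbc hx hy rfl, by simp, by simp⟩, ?_⟩
  rintro T ⟨hT, hxT, hyT⟩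
  obtain ⟨w, hwx, hwy, rfl⟩ := Set.exists_eq_triple_of_ncard_eq_three hT.1.1 hxT hyT hxy
  have meet {v : Edge} (hv : v ∈ ({x, y, w} : Set Edge)) (hvw : w ≠ v) : ¬Disjoint v.1 w.1 :=
    hT.1.2 hv (by simp) (Ne.symm hvw)
  rcases Finset.eq_pair_or_exists_eq_pair_of_not_disjoint w.2 hbc
    (hx ▸ Subtype.coe_injective.ne hwx) (hy ▸ Subtype.coe_injective.ne hwy)
    (hx ▸ meet (by simp) hwx) (hy ▸ meet (by simp) hwy) with hw | ⟨d, hw, -⟩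
  · rw [show w = z from Subtype.ext hw]
  · exact absurd hT (not_isCompleteTriad_of_star hT.1 hx hy hw)

/-- For any triad `T` of edges, `|T^⊥| = 1` or `|T^⊥| = 3`; moreover
`|T^⊥| = 3` iff `T` is complete and `|T^⊥| = 1` iff `T` is incomplete. In addition, any two
distinct non-collinear edges are contained in a unique complete triad. -/
theorem statement0 :
    (∀ T : Set Edge, IsTriad T →
      ((perp T).ncard = 1 ∨ (perp T).ncard = 3) ∧
      ((perp T).ncard = 3 ↔ IsCompleteTriad T) ∧
      ((perp T).ncard = 1 ↔ ¬ IsCompleteTriad T)) ∧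
    (∀ x y : Edge, x ≠ y → ¬ Disjoint x.1 y.1 →
      ∃! T : Set Edge, IsCompleteTriad T ∧ x ∈ T ∧ y ∈ T) := by
  refine ⟨fun T hT => ?_, fun x y hxy h => existsUnique_isCompleteTriad hxy h⟩
  rcases hT.isCompleteTriad_and_ncard_perp with ⟨hc, h3⟩ | ⟨hc, h1⟩
  · simp [hc, h3]
  · simp [hc, h1]
end

section
/- Two distinct points α = (x,u) and β = (y,v) of 𝓢 are collinear if and only if x ≠ y, u ≠ v, u ∈ y^⊥ and v ∈ x^⊥. -/
open scoped symmDiff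

theorem Set.Finite.exists_bijOn_pair_of_encard_eq {α β : Type*} {s : Set α} {t : Set β}
    (hs : s.Finite) (hst : s.encard = t.encard) {x y : α} {u v : β} (hx : x ∈ s) (hy : y ∈ s)
    (hxy : x ≠ y) (hu : u ∈ t) (hv : v ∈ t) (huv : u ≠ v) :
    ∃ σ : α → β, Set.BijOn σ s t ∧ σ x = u ∧ σ y = v := by
  classical
  have hrest : (s \ {x, y}).encard = (t \ {u, v}).encard := by
    have hs' := Set.encard_sdiff_add_encard_of_subset
      (Set.insert_subset hx (Set.singleton_subset_iff.2 hy))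
    have ht' := Set.encard_sdiff_add_encard_of_subset
      (Set.insert_subset hu (Set.singleton_subset_iff.2 hv))
    rw [Set.encard_pair hxy] at hs'
    rw [Set.encard_pair huv] at ht'
    exact WithTop.add_right_cancel (by decide) (hs'.trans (hst.trans ht'.symm))
  have : Nonempty β := ⟨u⟩
  obtain ⟨τ, hτ⟩ := hs.sdiff.exists_bijOn_of_encard_eq hrest
  set σ := Function.update (Function.update τ y v) x u
  have hσx : σ x = u := by simp [σ]
  have hσy : σ y = v := by simp [σ, hxy.symm]
  have hrestσ : Set.BijOn σ (s \ {x, y}) (t \ {u, v}) :=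
    hτ.congr fun a ha => by
      simp only [Set.mem_sdiff, Set.mem_insert_iff, Set.mem_singleton_iff, not_or] at ha
      simp [σ, ha.2.1, ha.2.2]
  have hyσ : Set.BijOn σ (insert y (s \ {x, y})) (insert v (t \ {u, v})) :=
    hσy ▸ hrestσ.insert (a := y) (by simp [hσy])
  have hxσ := hyσ.insert (a := x) (by simp [hσx, huv])
  rw [hσx] at hxσ
  have hs_eq : insert x (insert y (s \ {x, y})) = s := by ext; grind
  have ht_eq : insert u (insert v (t \ {u, v})) = t := by ext; grind
  exact ⟨σ, hs_eq ▸ ht_eq ▸ hxσ, hσx, hσy⟩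

theorem Finset.subset_union_of_not_disjoint_symmDiff {α : Type*} [DecidableEq α]
    {x y e : Finset α} (he : e.card = 2) (hx : ¬ Disjoint e x) (hy : ¬ Disjoint e y)
      (hxy : ¬ Disjoint e (x ∆ y)) : e ⊆ x ∪ y := by
  obtain ⟨a, hae, hax⟩ := Finset.not_disjoint_iff.1 hx
  obtain ⟨b, hbe, hby⟩ := Finset.not_disjoint_iff.1 hy
  obtain ⟨c, hce, hc⟩ := Finset.not_disjoint_iff.1 hxy
  -- `c` lies in exactly one of `x`, `y`, so it differs from `b` or from `a`
  obtain ⟨d, hde, hd, hcd⟩ : ∃ d ∈ e, d ∈ x ∪ y ∧ c ≠ d := by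
    rcases Finset.mem_symmDiff.1 hc with ⟨-, hcy⟩ | ⟨-, hcx⟩
    · exact ⟨b, hbe, Finset.mem_union_right _ hby, fun h => hcy (h ▸ hby)⟩
    · exact ⟨a, hae, Finset.mem_union_left _ hax, fun h => hcx (h ▸ hax)⟩
  have hcxy : c ∈ x ∪ y := Finset.mem_union.2 ((Finset.mem_symmDiff.1 hc).imp And.left And.left)
  have hecd : {c, d} = e :=
    Finset.eq_of_subset_of_card_le (Finset.insert_subset hce (Finset.singleton_subset_iff.2 hde))
      (by rw [he, Finset.card_pair hcd])
  rw [← hecd]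
  exact Finset.insert_subset hcxy (Finset.singleton_subset_iff.2 hd)

namespace Edge

theorem nonempty (e : Edge) : e.1.Nonempty :=
  Finset.card_pos.1 (by rw [e.2]; norm_num)

theorem not_disjoint_self (e : Edge) : ¬ Disjoint e.1 e.1 := by
  rw [Finset.disjoint_self_iff_empty]
  exact e.nonempty.ne_empty

theorem ne_of_disjoint {x y : Edge} (h : Disjoint x.1 y.1) : x ≠ y := by
  rintro rfl
  exact x.not_disjoint_self h

theorem sdiff_nonempty {x y : Edge} (hxy : x ≠ y) : (x.1 \ y.1).Nonempty := by
  rw [Finset.sdiff_nonempty]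
  exact fun hsub => hxy (Subtype.ext (Finset.eq_of_subset_of_card_le hsub (by rw [x.2, y.2])))

theorem card_sdiff_of_not_disjoint {x y : Edge} (hxy : x ≠ y) (h : ¬ Disjoint x.1 y.1) :
    (x.1 \ y.1).card = 1 := by
  have hinter := Finset.card_pos.2 (Finset.not_disjoint_iff_nonempty_inter.1 h)
  have hsdiff := (sdiff_nonempty hxy).card_pos
  have := Finset.card_sdiff_add_card_inter x.1 y.1
  rw [x.2] at this
  omega

theorem ncard_setOf_val_subset (D : Finset (Fin 6)) :
    {e : Edge | e.1 ⊆ D}.ncard = D.card.choose 2 := by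
  rw [← Finset.card_powersetCard, ← Set.ncard_coe_finset,
    ← Set.ncard_image_of_injective _ Subtype.val_injective]
  congr 1
  ext s
  simp [Finset.mem_powersetCard, and_comm]

end Edge

theorem mem_perp_singleton {x e : Edge} : e ∈ perp {x} ↔ x = e ∨ Disjoint x.1 e.1 := by
  simp [perp]

theorem mem_perp_pair {x y e : Edge} : e ∈ perp {x, y} ↔ e ∈ perp {x} ∧ e ∈ perp {y} := by
  simp [perp]

theorem perp_anti {A B : Set Edge} (h : A ⊆ B) : perp B ⊆ perp A :=
  fun _ he x hx => he x (h hx)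

theorem NPoint.snd_mem_perp (α : NPoint) : α.1.2 ∈ perp {α.1.1} :=
  mem_perp_singleton.2 α.2

theorem IsFactor.subset_perp {T : Set Edge} (hT : IsFactor T) : T ⊆ perp T := by
  intro e he x hx
  by_cases hxe : x = e
  · exact Or.inl hxe
  · exact Or.inr (hT.2 hx he hxe)

section

variable {x y : Edge}

def complEdge (x y : Edge) (h : Disjoint x.1 y.1) : Edge :=
  ⟨(x.1 ∪ y.1)ᶜ, by rw [Finset.card_compl, Finset.card_union_of_disjoint h, x.2, y.2]; rfl⟩

theorem isFactor_complEdge (hxy : x ≠ y) (h : Disjoint x.1 y.1) :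
    IsFactor {x, y, complEdge x y h} := by
  have hxz : Disjoint x.1 (complEdge x y h).1 :=
    disjoint_compl_right.mono_left Finset.subset_union_left
  have hyz : Disjoint y.1 (complEdge x y h).1 :=
    disjoint_compl_right.mono_left Finset.subset_union_right
  refine ⟨Set.ncard_eq_three.2
    ⟨x, y, _, hxy, Edge.ne_of_disjoint hxz, Edge.ne_of_disjoint hyz, rfl⟩, ?_⟩
  simp [Set.pairwise_insert, disjoint_comm, h, hxz, hyz]

theorem perp_pair_subset_of_disjoint (h : Disjoint x.1 y.1) :
    perp {x, y} ⊆ {x, y, complEdge x y h} := by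
  intro e he
  obtain ⟨hx, hy⟩ := mem_perp_pair.1 he
  rcases mem_perp_singleton.1 hx with rfl | hx
  · exact Or.inl rfl
  rcases mem_perp_singleton.1 hy with rfl | hy
  · exact Or.inr (Or.inl rfl)
  refine Or.inr (Or.inr (Subtype.ext (Finset.eq_of_subset_of_card_le ?_ ?_)))
  · exact Finset.subset_compl_iff_disjoint_left.2 (Finset.disjoint_union_left.2 ⟨hx, hy⟩)
  · rw [e.2, (complEdge x y h).2]

def symmDiffEdge (x y : Edge) (hxy : x ≠ y) (h : ¬ Disjoint x.1 y.1) : Edge :=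
  ⟨x.1 ∆ y.1, by
    rw [symmDiff_def, Finset.sup_eq_union, Finset.card_union_of_disjoint disjoint_sdiff_sdiff,
      Edge.card_sdiff_of_not_disjoint hxy h,
      Edge.card_sdiff_of_not_disjoint hxy.symm fun h' => h h'.symm]⟩

theorem card_union_of_not_disjoint (hxy : x ≠ y) (h : ¬ Disjoint x.1 y.1) :
    (x.1 ∪ y.1).card = 3 := by
  rw [← Finset.union_sdiff_self_eq_union, Finset.card_union_of_disjoint Finset.disjoint_sdiff,
    x.2, Edge.card_sdiff_of_not_disjoint hxy.symm fun h' => h h'.symm]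

theorem symmDiffEdge_subset_union (hxy : x ≠ y) (h : ¬ Disjoint x.1 y.1) :
    (symmDiffEdge x y hxy h).1 ⊆ x.1 ∪ y.1 :=
  symmDiff_le_sup

theorem isTriad_symmDiffEdge (hxy : x ≠ y) (h : ¬ Disjoint x.1 y.1) :
    IsTriad {x, y, symmDiffEdge x y hxy h} := by
  have hxz : ¬ Disjoint x.1 (symmDiffEdge x y hxy h).1 := by
    obtain ⟨a, ha⟩ := Edge.sdiff_nonempty hxy
    rw [Finset.mem_sdiff] at ha
    exact Finset.not_disjoint_iff.2 ⟨a, ha.1, Finset.mem_symmDiff.2 (Or.inl ha)⟩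
  have hyz : ¬ Disjoint y.1 (symmDiffEdge x y hxy h).1 := by
    obtain ⟨a, ha⟩ := Edge.sdiff_nonempty hxy.symm
    rw [Finset.mem_sdiff] at ha
    exact Finset.not_disjoint_iff.2 ⟨a, ha.1, Finset.mem_symmDiff.2 (Or.inr ha)⟩
  have hxz' : x ≠ symmDiffEdge x y hxy h := fun he =>
    y.nonempty.ne_empty (symmDiff_eq_left.1 (congrArg Subtype.val he).symm)
  have hyz' : y ≠ symmDiffEdge x y hxy h := fun he =>
    x.nonempty.ne_empty (symmDiff_eq_right.1 (congrArg Subtype.val he).symm)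
  refine ⟨Set.ncard_eq_three.2 ⟨x, y, _, hxy, hxz', hyz', rfl⟩, ?_⟩
  simp [Set.pairwise_insert, disjoint_comm, h, hxz, hyz]

theorem isCompleteTriad_symmDiffEdge (hxy : x ≠ y) (h : ¬ Disjoint x.1 y.1) :
    IsCompleteTriad {x, y, symmDiffEdge x y hxy h} := by
  refine ⟨isTriad_symmDiffEdge hxy h, ?_⟩
  rintro ⟨U, hTU, hU4, hU⟩
  have hUA : U ⊆ {e | e.1 ⊆ x.1 ∪ y.1} := by
    intro e he
    have meets : ∀ t ∈ ({x, y, symmDiffEdge x y hxy h} : Set Edge), ¬ Disjoint e.1 t.1 := by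
      intro t ht
      by_cases het : e = t
      · exact het ▸ e.not_disjoint_self
      · exact hU he (hTU ht) het
    exact Finset.subset_union_of_not_disjoint_symmDiff e.2 (meets x (by simp)) (meets y (by simp))
      (meets (symmDiffEdge x y hxy h) (by simp))
  have := Set.ncard_le_ncard hUA (Set.toFinite _)
  rw [hU4, Edge.ncard_setOf_val_subset, card_union_of_not_disjoint hxy h] at this
  norm_num at this

theorem perp_pair_subset_of_not_disjoint (hxy : x ≠ y) (h : ¬ Disjoint x.1 y.1) :
    perp {x, y} ⊆ {e | e.1 ⊆ (x.1 ∪ y.1)ᶜ} := by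
  intro e he
  obtain ⟨hx, hy⟩ := mem_perp_pair.1 he
  rcases mem_perp_singleton.1 hx with rfl | hx
  · rcases mem_perp_singleton.1 hy with h' | h'
    exacts [absurd h'.symm hxy, absurd h'.symm h]
  rcases mem_perp_singleton.1 hy with rfl | hy
  · exact absurd hx h
  exact Finset.subset_compl_iff_disjoint_left.2 (Finset.disjoint_union_left.2 ⟨hx, hy⟩)

theorem perp_triple_symmDiffEdge (hxy : x ≠ y) (h : ¬ Disjoint x.1 y.1) :
    perp {x, y, symmDiffEdge x y hxy h} = {e | e.1 ⊆ (x.1 ∪ y.1)ᶜ} := by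
  refine subset_antisymm ((perp_anti (A := {x, y}) (by simp [Set.insert_subset_iff])).trans
    (perp_pair_subset_of_not_disjoint hxy h)) fun e he t ht => Or.inr ?_
  have htA : t.1 ⊆ x.1 ∪ y.1 := by
    rcases ht with rfl | rfl | rfl
    exacts [Finset.subset_union_left, Finset.subset_union_right, symmDiffEdge_subset_union hxy h]
  exact (Finset.subset_compl_iff_disjoint_left.1 he).mono_left htA

theorem exists_factor_or_completeTriad (hxy : x ≠ y) :
    ∃ T : Set Edge, (IsFactor T ∨ IsCompleteTriad T) ∧ x ∈ T ∧ y ∈ T ∧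
      (perp T).ncard = 3 ∧ perp {x, y} ⊆ perp T := by
  by_cases h : Disjoint x.1 y.1
  · have hT := isFactor_complEdge hxy h
    have hsub := perp_pair_subset_of_disjoint h
    have hperp : perp {x, y, complEdge x y h} = {x, y, complEdge x y h} :=
      ((perp_anti (A := {x, y}) (by simp [Set.insert_subset_iff])).trans hsub).antisymm
        hT.subset_perp
    exact ⟨_, Or.inl hT, by simp, by simp, by rw [hperp]; exact hT.1, by rw [hperp]; exact hsub⟩
  · refine ⟨_, Or.inr (isCompleteTriad_symmDiffEdge hxy h), by simp, by simp, ?_, ?_⟩ <;>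
      rw [perp_triple_symmDiffEdge hxy h]
    · rw [Edge.ncard_setOf_val_subset, Finset.card_compl, card_union_of_not_disjoint hxy h]
      rfl
    · exact perp_pair_subset_of_not_disjoint hxy h

end

theorem IsLine.perp_conditions_of_mem {L : Set NPoint} (hL : IsLine L) {α β : NPoint}
    (hα : α ∈ L) (hβ : β ∈ L) (h : α ≠ β) :
    α.1.1 ≠ β.1.1 ∧ α.1.2 ≠ β.1.2 ∧ α.1.2 ∈ perp {β.1.1} ∧ β.1.2 ∈ perp {α.1.1} := by
  obtain ⟨T, σ, -, hσ, rfl⟩ := hL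
  obtain ⟨hx, hu⟩ := hα
  obtain ⟨hy, hv⟩ := hβ
  have hxy : α.1.1 ≠ β.1.1 := fun he => h (Subtype.ext (Prod.ext he (by rw [hu, hv, he])))
  refine ⟨hxy, fun he => hxy (hσ.injOn hx hy (hu ▸ hv ▸ he)), ?_, ?_⟩
  · exact hu ▸ perp_anti (Set.singleton_subset_iff.2 hy) (hσ.mapsTo hx)
  · exact hv ▸ perp_anti (Set.singleton_subset_iff.2 hx) (hσ.mapsTo hy)

theorem exists_isLine_of_perp_conditions {α β : NPoint} (hxy : α.1.1 ≠ β.1.1)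
    (huv : α.1.2 ≠ β.1.2) (hu : α.1.2 ∈ perp {β.1.1}) (hv : β.1.2 ∈ perp {α.1.1}) :
    ∃ L, IsLine L ∧ α ∈ L ∧ β ∈ L := by
  obtain ⟨T, hT, hxT, hyT, hperp, hsub⟩ := exists_factor_or_completeTriad hxy
  have hT3 : T.ncard = 3 := hT.elim (·.1) (·.1.1)
  have hcard : T.encard = (perp T).encard := by
    rw [← (Set.toFinite T).cast_ncard_eq, ← (Set.toFinite _).cast_ncard_eq, hT3, hperp]
  obtain ⟨σ, hσ, hσx, hσy⟩ := (Set.toFinite T).exists_bijOn_pair_of_encard_eq hcard hxT hyT hxy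
    (hsub (mem_perp_pair.2 ⟨α.snd_mem_perp, hu⟩)) (hsub (mem_perp_pair.2 ⟨hv, β.snd_mem_perp⟩))
    huv
  exact ⟨_, ⟨T, σ, hT, hσ, rfl⟩, ⟨hxT, hσx.symm⟩, ⟨hyT, hσy.symm⟩⟩

theorem statement1_general (α β : NPoint) :
    NG.Adj α β ↔
      (α.1.1 ≠ β.1.1 ∧ α.1.2 ≠ β.1.2 ∧
        α.1.2 ∈ perp {β.1.1} ∧ β.1.2 ∈ perp {α.1.1}) :=
  ⟨fun ⟨hne, _, hL, hα, hβ⟩ => hL.perp_conditions_of_mem hα hβ hne,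
    fun ⟨hxy, huv, hu, hv⟩ =>
      ⟨fun he => hxy (he ▸ rfl), exists_isLine_of_perp_conditions hxy huv hu hv⟩⟩

/-- Two distinct points `α = (x,u)` and `β = (y,v)` of 𝓢 are collinear iff
`x ≠ y`, `u ≠ v`, `u ∈ y^⊥` and `v ∈ x^⊥`. -/
theorem statement1 (α β : NPoint) (h : α ≠ β) :
    NG.Adj α β ↔
      (α.1.1 ≠ β.1.1 ∧ α.1.2 ≠ β.1.2 ∧
        α.1.2 ∈ perp {β.1.1} ∧ β.1.2 ∈ perp {α.1.1}) :=
  statement1_general α β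
end

section
/- Let α = (x,u) and β = (y,v) be distinct non-collinear points of 𝓢 such that either x = y and u ≠ v, or x ≠ y and u = v. Then |{α,β}^⊥| ≥ 2. -/
/-
Every line is `{(p, σ p) : p ∈ T}` for a factor or complete triad `T`, where `|T| = |T^⊥| = 3` and
`σ : T → T^⊥` is any bijection; so two points `(p, q)`, `(p', q')` with `p ≠ p'` in `T` and
`q ≠ q'` in `T^⊥` are collinear. If `α = (x, u)` and `β = (x, v)`, then `x, u, v` lie in a common
factor `F = F^⊥`, unless `u` and `v` meet; then `x` lies in the triangle `T` of edges inside
`(u ∪ v)ᶜ`, a complete triad whose `T^⊥` is the triangle of edges inside `u ∪ v`. With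
`q ∈ T^⊥ \ {u, v}`, the two points `(p, q)`, `p ∈ T \ {x}`, are collinear with both `α` and `β`.
The case `α = (x, u)`, `β = (y, u)` is dual, with the roles of `T` and `T^⊥` exchanged.
-/
namespace Set

theorem bijOn_update_of_sdiff {α β : Type*} [DecidableEq α] {s : Set α} {t : Set β} {g : α → β}
    {a : α} {u : β} (hg : BijOn g (s \ {a}) (t \ {u})) (ha : a ∈ s) (hu : u ∈ t) :
    BijOn (Function.update g a u) s t := by
  have h := (hg.congr fun x hx => (Function.update_of_ne hx.2 u g).symm).insert
    (a := a) (by simp)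
  rwa [Function.update_self, insert_sdiff_singleton, insert_sdiff_singleton,
    insert_eq_of_mem ha, insert_eq_of_mem hu] at h

theorem Finite.exists_bijOn_of_encard_eq_of_mem {α β : Type*} {s : Set α} {t : Set β}
    (hs : s.Finite) (h : s.encard = t.encard) {a : α} {u : β} (ha : a ∈ s) (hu : u ∈ t) :
    ∃ σ : α → β, BijOn σ s t ∧ σ a = u := by
  classical
  have : Nonempty β := ⟨u⟩
  obtain ⟨g, hg⟩ := (hs.sdiff (t := {a})).exists_bijOn_of_encard_eq (t := t \ {u})
    (by rw [encard_sdiff_singleton_of_mem ha, encard_sdiff_singleton_of_mem hu, h])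
  exact ⟨_, bijOn_update_of_sdiff hg ha hu, Function.update_self a u g⟩

theorem Finite.exists_bijOn_of_encard_eq_of_mem₂ {α β : Type*} {s : Set α} {t : Set β}
    (hs : s.Finite) (h : s.encard = t.encard) {a b : α} {u v : β} (ha : a ∈ s) (hb : b ∈ s)
    (hu : u ∈ t) (hv : v ∈ t) (hab : a ≠ b) (huv : u ≠ v) :
    ∃ σ : α → β, BijOn σ s t ∧ σ a = u ∧ σ b = v := by
  classical
  obtain ⟨g, hg, hgb⟩ := (hs.sdiff (t := {a})).exists_bijOn_of_encard_eq_of_mem (t := t \ {u})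
    (by rw [encard_sdiff_singleton_of_mem ha, encard_sdiff_singleton_of_mem hu, h])
    ⟨hb, hab.symm⟩ ⟨hv, huv.symm⟩
  exact ⟨_, bijOn_update_of_sdiff hg ha hu, Function.update_self a u g,
    by rw [Function.update_of_ne hab.symm, hgb]⟩

theorem exists_mem_ne_ne_of_two_lt_ncard {α : Type*} {s : Set α} (hs : 2 < s.ncard) (a b : α) :
    ∃ q ∈ s, q ≠ a ∧ q ≠ b := by
  obtain ⟨q, hq, hqab⟩ := exists_mem_notMem_of_ncard_lt_ncard (s := {a, b}) (t := s)
    ((ncard_insert_le a {b}).trans_lt (by rwa [ncard_singleton]))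
  exact ⟨q, hq, fun h => hqab (by simp [h]), fun h => hqab (by simp [h])⟩

theorem exists_ne_mem_ne_of_two_lt_ncard {α : Type*} {s : Set α} (hs : 2 < s.ncard) {a : α}
    (ha : a ∈ s) : ∃ p₁ ∈ s, ∃ p₂ ∈ s, p₁ ≠ p₂ ∧ p₁ ≠ a ∧ p₂ ≠ a := by
  obtain ⟨p₁, h₁, p₂, h₂, hp⟩ := (one_lt_ncard_iff_nontrivial_and_finite (s := s \ {a})).mp
    (by rw [ncard_sdiff_singleton_of_mem ha]; omega) |>.1
  exact ⟨p₁, h₁.1, p₂, h₂.1, hp, h₁.2, h₂.2⟩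

end Set

theorem Edge.ne_of_disjoint_s2 {e f : Edge} (h : Disjoint e.1 f.1) : e ≠ f := by
  rintro rfl
  simpa [disjoint_self.mp h] using e.2

def Edge.third (e f : Edge) (h : Disjoint e.1 f.1) : Edge :=
  ⟨(e.1 ∪ f.1)ᶜ, by
    rw [Finset.card_compl, Finset.card_union_of_disjoint h, e.2, f.2, Fintype.card_fin]⟩

theorem Edge.disjoint_third_left (e f : Edge) (h : Disjoint e.1 f.1) :
    Disjoint e.1 (Edge.third e f h).1 :=
  disjoint_compl_right.mono_left le_sup_left

theorem Edge.disjoint_third_right (e f : Edge) (h : Disjoint e.1 f.1) :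
    Disjoint f.1 (Edge.third e f h).1 :=
  disjoint_compl_right.mono_left le_sup_right

theorem Edge.card_union_of_not_disjoint {e f : Edge} (hef : e ≠ f) (h : ¬ Disjoint e.1 f.1) :
    (e.1 ∪ f.1).card = 3 := by
  have hinter := (Finset.not_disjoint_iff_nonempty_inter.mp h).card_pos
  have hunion : e.1.card < (e.1 ∪ f.1).card := by
    refine Finset.card_lt_card (Finset.ssubset_iff_subset_ne.mpr ⟨Finset.subset_union_left, ?_⟩)
    intro heq
    have hfe : f.1 ⊆ e.1 := by rw [heq]; exact Finset.subset_union_right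
    exact hef (Subtype.ext (Finset.eq_of_subset_of_card_le hfe (by rw [e.2, f.2])).symm)
  have := Finset.card_union_add_card_inter e.1 f.1
  rw [e.2, f.2] at this
  rw [e.2] at hunion
  omega

theorem isFactor_triple {a b c : Edge} (hab : Disjoint a.1 b.1) (hac : Disjoint a.1 c.1)
    (hbc : Disjoint b.1 c.1) : IsFactor {a, b, c} := by
  refine ⟨Set.ncard_eq_three.mpr ⟨a, b, c, Edge.ne_of_disjoint_s2 hab, Edge.ne_of_disjoint_s2 hac,
    Edge.ne_of_disjoint_s2 hbc, rfl⟩, ?_⟩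
  simp only [Set.pairwise_insert, Set.pairwise_singleton, Set.mem_insert_iff,
    Set.mem_singleton_iff]
  grind [Disjoint.symm]

theorem perp_eq_self_of_isFactor {T : Set Edge} (hT : IsFactor T) : perp T = T := by
  ext y
  refine ⟨fun hy => ?_, fun hy x hx => or_iff_not_imp_left.mpr (hT.2 hx hy)⟩
  by_contra hyT
  have hdisj : ∀ x ∈ T, Disjoint x.1 y.1 := fun x hx =>
    (hy x hx).resolve_left fun h => hyT (h ▸ hx)
  obtain ⟨a, b, c, hab, hac, hbc, rfl⟩ := Set.ncard_eq_three.mp hT.1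
  have dab : Disjoint a.1 b.1 := hT.2 (by simp) (by simp) hab
  have dac : Disjoint a.1 c.1 := hT.2 (by simp) (by simp) hac
  have dbc : Disjoint b.1 c.1 := hT.2 (by simp) (by simp) hbc
  have hcover : a.1 ∪ b.1 ∪ c.1 = Finset.univ := by
    rw [← Finset.card_eq_iff_eq_univ, Finset.card_union_of_disjoint
      (Finset.disjoint_union_left.mpr ⟨dac, dbc⟩), Finset.card_union_of_disjoint dab,
      a.2, b.2, c.2, Fintype.card_fin]
  obtain ⟨p, hp⟩ := Finset.card_pos.mp (y.2 ▸ two_pos)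
  have hpT : p ∈ a.1 ∪ b.1 ∪ c.1 := hcover ▸ Finset.mem_univ p
  simp only [Finset.mem_union] at hpT
  rcases hpT with (h | h) | h
  · exact Finset.disjoint_left.mp (hdisj a (by simp)) h hp
  · exact Finset.disjoint_left.mp (hdisj b (by simp)) h hp
  · exact Finset.disjoint_left.mp (hdisj c (by simp)) h hp

theorem IsFactor.ncard_perp {F : Set Edge} (hF : IsFactor F) : (perp F).ncard = 3 := by
  rw [perp_eq_self_of_isFactor hF]
  exact hF.1

def edgesIn (S : Finset (Fin 6)) : Set Edge := {e | e.1 ⊆ S}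

section Triangle

variable {S : Finset (Fin 6)}

theorem ncard_edgesIn (hS : S.card = 3) : (edgesIn S).ncard = 3 := by
  have himage : Subtype.val '' edgesIn S = ↑(S.powersetCard 2) := by
    ext t
    simp [edgesIn, Finset.mem_powersetCard]
  rw [← Set.ncard_image_of_injective _ Subtype.val_injective, himage, Set.ncard_coe_finset,
    Finset.card_powersetCard, hS]
  rfl

theorem not_disjoint_of_mem_edgesIn (hS : S.card = 3) {e f : Edge} (he : e ∈ edgesIn S)
    (hf : f ∈ edgesIn S) : ¬ Disjoint e.1 f.1 :=
  Finset.not_disjoint_iff_nonempty_inter.mpr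
    (Finset.inter_nonempty_of_card_lt_card_add_card he hf (by rw [hS, e.2, f.2]; norm_num))

theorem exists_mem_edgesIn_disjoint (hS : S.card = 3) {d : Edge} (hd : d ∉ edgesIn S) :
    ∃ e ∈ edgesIn S, Disjoint e.1 d.1 := by
  obtain ⟨p, hpd, hpS⟩ := Finset.not_subset.mp hd
  have hinter : (d.1 ∩ S).card ≤ 1 := by
    have := Finset.card_lt_card (Finset.ssubset_iff_subset_ne.mpr ⟨Finset.inter_subset_left,
      fun h => hpS (Finset.mem_inter.mp (by rw [h]; exact hpd)).2⟩)
    rw [d.2] at this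
    omega
  obtain ⟨t, htS, ht⟩ := Finset.exists_subset_card_eq (s := S \ d.1) (n := 2)
    (by rw [Finset.card_sdiff, hS]; omega)
  exact ⟨⟨t, ht⟩, htS.trans Finset.sdiff_subset, Finset.disjoint_of_subset_left htS
    Finset.sdiff_disjoint⟩

theorem isCompleteTriad_edgesIn (hS : S.card = 3) : IsCompleteTriad (edgesIn S) := by
  refine ⟨⟨ncard_edgesIn hS, fun e he f hf _ => not_disjoint_of_mem_edgesIn hS he hf⟩, ?_⟩
  rintro ⟨U, hSU, hU, hUpair⟩
  obtain ⟨d, hdU, hdS⟩ : ∃ d ∈ U, d ∉ edgesIn S := by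
    by_contra! h
    have := Set.ncard_le_ncard h
    rw [hU, ncard_edgesIn hS] at this
    omega
  obtain ⟨e, heS, hed⟩ := exists_mem_edgesIn_disjoint hS hdS
  exact hUpair (hSU heS) hdU (Edge.ne_of_disjoint_s2 hed) hed

theorem perp_edgesIn (hS : S.card = 3) : perp (edgesIn S) = edgesIn Sᶜ := by
  ext y
  refine ⟨fun hy => ?_, fun hy x hx => Or.inr (Finset.disjoint_of_subset_left hx
    (Finset.subset_compl_iff_disjoint_left.mp hy))⟩
  by_contra hyS
  obtain ⟨p, hpy, hpS⟩ := Finset.not_subset.mp hyS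
  rw [Finset.mem_compl, not_not] at hpS
  -- the edge `{p, r}` of the triangle meets `y` in `p` but differs from `y`
  obtain ⟨r, hrS, hry⟩ : ∃ r ∈ S, r ∉ y.1 := Finset.not_subset.mp fun h => by
    have := Finset.card_le_card h
    rw [hS, y.2] at this
    omega
  have hpr : p ≠ r := fun h => hry (h ▸ hpy)
  rcases hy ⟨{p, r}, Finset.card_pair hpr⟩ (Finset.insert_subset hpS
    (Finset.singleton_subset_iff.mpr hrS)) with h | h
  · exact hry (h ▸ Finset.mem_insert_of_mem (Finset.mem_singleton_self r))
  · exact Finset.disjoint_left.mp h (Finset.mem_insert_self p {r}) hpy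

theorem card_compl_eq_three (hS : S.card = 3) : Sᶜ.card = 3 := by
  rw [Finset.card_compl, hS, Fintype.card_fin]

theorem ncard_perp_edgesIn (hS : S.card = 3) : (perp (edgesIn S)).ncard = 3 := by
  rw [perp_edgesIn hS, ncard_edgesIn (card_compl_eq_three hS)]

end Triangle

instance : Finite NPoint := by
  unfold NPoint
  infer_instance

section Lines

variable {T : Set Edge}

theorem ncard_of_isFactor_or_isCompleteTriad (hT : IsFactor T ∨ IsCompleteTriad T) :
    T.ncard = 3 :=
  hT.elim (·.1) (·.1.1)

theorem adj_of_mem_of_mem_perp (hT : IsFactor T ∨ IsCompleteTriad T)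
    (hperp : (perp T).ncard = 3) {α β : NPoint} (hx : α.1.1 ∈ T) (hy : β.1.1 ∈ T)
    (hu : α.1.2 ∈ perp T) (hv : β.1.2 ∈ perp T) (hxy : α.1.1 ≠ β.1.1) (huv : α.1.2 ≠ β.1.2) :
    NG.Adj α β := by
  obtain ⟨σ, hσ, hσx, hσy⟩ := T.toFinite.exists_bijOn_of_encard_eq_of_mem₂
    (by rw [← T.toFinite.cast_ncard_eq, ← (perp T).toFinite.cast_ncard_eq,
      ncard_of_isFactor_or_isCompleteTriad hT, hperp])
    hx hy hu hv hxy huv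
  exact ⟨fun h => hxy (congrArg (·.1.1) h), _, ⟨T, σ, hT, hσ, rfl⟩, ⟨hx, hσx.symm⟩,
    ⟨hy, hσy.symm⟩⟩

theorem two_le_ncard_common_adj {α β γ₁ γ₂ : NPoint} (hne : γ₁ ≠ γ₂) (h₁α : NG.Adj γ₁ α)
    (h₁β : NG.Adj γ₁ β) (h₂α : NG.Adj γ₂ α) (h₂β : NG.Adj γ₂ β) :
    2 ≤ {γ : NPoint | NG.Adj γ α ∧ NG.Adj γ β}.ncard :=
  (Set.one_lt_ncard_iff).mpr ⟨γ₁, γ₂, ⟨h₁α, h₁β⟩, ⟨h₂α, h₂β⟩, hne⟩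

theorem two_le_ncard_common_adj_of_fst_eq (hT : IsFactor T ∨ IsCompleteTriad T)
    (hperp : (perp T).ncard = 3) {α β : NPoint} (hx : α.1.1 ∈ T) (hxy : α.1.1 = β.1.1)
    (hu : α.1.2 ∈ perp T) (hv : β.1.2 ∈ perp T) :
    2 ≤ {γ : NPoint | NG.Adj γ α ∧ NG.Adj γ β}.ncard := by
  have hT₃ := ncard_of_isFactor_or_isCompleteTriad hT
  obtain ⟨q, hq, hqu, hqv⟩ := Set.exists_mem_ne_ne_of_two_lt_ncard
    (by omega : 2 < (perp T).ncard) α.1.2 β.1.2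
  obtain ⟨p₁, hp₁, p₂, hp₂, hp, hp₁x, hp₂x⟩ := Set.exists_ne_mem_ne_of_two_lt_ncard (by omega) hx
  refine two_le_ncard_common_adj (γ₁ := ⟨(p₁, q), hq p₁ hp₁⟩) (γ₂ := ⟨(p₂, q), hq p₂ hp₂⟩)
    (fun h => hp (congrArg (·.1.1) h)) ?_ ?_ ?_ ?_
  · exact adj_of_mem_of_mem_perp hT hperp hp₁ hx hq hu hp₁x hqu
  · exact adj_of_mem_of_mem_perp hT hperp hp₁ (hxy ▸ hx) hq hv (hxy ▸ hp₁x) hqv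
  · exact adj_of_mem_of_mem_perp hT hperp hp₂ hx hq hu hp₂x hqu
  · exact adj_of_mem_of_mem_perp hT hperp hp₂ (hxy ▸ hx) hq hv (hxy ▸ hp₂x) hqv

theorem two_le_ncard_common_adj_of_snd_eq (hT : IsFactor T ∨ IsCompleteTriad T)
    (hperp : (perp T).ncard = 3) {α β : NPoint} (hx : α.1.1 ∈ T) (hy : β.1.1 ∈ T)
    (hu : α.1.2 ∈ perp T) (huv : α.1.2 = β.1.2) :
    2 ≤ {γ : NPoint | NG.Adj γ α ∧ NG.Adj γ β}.ncard := by
  have hT₃ := ncard_of_isFactor_or_isCompleteTriad hT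
  obtain ⟨q, hq, hqx, hqy⟩ := Set.exists_mem_ne_ne_of_two_lt_ncard
    (by omega : 2 < T.ncard) α.1.1 β.1.1
  obtain ⟨p₁, hp₁, p₂, hp₂, hp, hp₁u, hp₂u⟩ := Set.exists_ne_mem_ne_of_two_lt_ncard (by omega) hu
  refine two_le_ncard_common_adj (γ₁ := ⟨(q, p₁), hp₁ q hq⟩) (γ₂ := ⟨(q, p₂), hp₂ q hq⟩)
    (fun h => hp (congrArg (·.1.2) h)) ?_ ?_ ?_ ?_
  · exact adj_of_mem_of_mem_perp hT hperp hq hx hp₁ hu hqx hp₁u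
  · exact adj_of_mem_of_mem_perp hT hperp hq hy hp₁ (huv ▸ hu) hqy (huv ▸ hp₁u)
  · exact adj_of_mem_of_mem_perp hT hperp hq hx hp₂ hu hqx hp₂u
  · exact adj_of_mem_of_mem_perp hT hperp hq hy hp₂ (huv ▸ hu) hqy (huv ▸ hp₂u)

end Lines

theorem exists_factor_or_triangle {a b c : Edge} (hb : a = b ∨ Disjoint a.1 b.1)
    (hc : a = c ∨ Disjoint a.1 c.1) (hbc : b ≠ c) :
    (∃ F, IsFactor F ∧ a ∈ F ∧ b ∈ F ∧ c ∈ F) ∨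
      ∃ S : Finset (Fin 6), S.card = 3 ∧ a ∈ edgesIn S ∧ b ∈ edgesIn Sᶜ ∧ c ∈ edgesIn Sᶜ := by
  rcases hb with rfl | hab
  · have hac := hc.resolve_left hbc
    exact .inl ⟨_, isFactor_triple hac (Edge.disjoint_third_left a c hac)
      (Edge.disjoint_third_right a c hac), by simp, by simp, by simp⟩
  rcases hc with rfl | hac
  · exact .inl ⟨_, isFactor_triple hab (Edge.disjoint_third_left a b hab)
      (Edge.disjoint_third_right a b hab), by simp, by simp, by simp⟩
  by_cases hbc' : Disjoint b.1 c.1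
  · exact .inl ⟨_, isFactor_triple hab hac hbc', by simp, by simp, by simp⟩
  · refine .inr ⟨(b.1 ∪ c.1)ᶜ, ?_, ?_, ?_, ?_⟩
    · rw [Finset.card_compl, Edge.card_union_of_not_disjoint hbc hbc', Fintype.card_fin]
    · exact Finset.subset_compl_iff_disjoint_right.mpr
        (Finset.disjoint_union_right.mpr ⟨hab, hac⟩)
    · exact (compl_compl (b.1 ∪ c.1)).symm ▸ Finset.subset_union_left
    · exact (compl_compl (b.1 ∪ c.1)).symm ▸ Finset.subset_union_right

theorem statement2_general (α β : NPoint)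
    (hcase : (α.1.1 = β.1.1 ∧ α.1.2 ≠ β.1.2) ∨ (α.1.1 ≠ β.1.1 ∧ α.1.2 = β.1.2)) :
    2 ≤ {γ : NPoint | NG.Adj γ α ∧ NG.Adj γ β}.ncard := by
  obtain ⟨⟨x, u⟩, hxu⟩ := α
  obtain ⟨⟨y, v⟩, hyv⟩ := β
  rcases hcase with ⟨rfl, huv⟩ | ⟨hxy, rfl⟩
  · rcases exists_factor_or_triangle hxu hyv huv with
      ⟨F, hF, hx, hu, hv⟩ | ⟨S, hS, hx, hu, hv⟩
    · have hperp := perp_eq_self_of_isFactor hF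
      exact two_le_ncard_common_adj_of_fst_eq (.inl hF) hF.ncard_perp hx rfl (hperp.ge hu)
        (hperp.ge hv)
    · have hperp := perp_edgesIn hS
      exact two_le_ncard_common_adj_of_fst_eq (.inr (isCompleteTriad_edgesIn hS))
        (ncard_perp_edgesIn hS) hx rfl (hperp.ge hu) (hperp.ge hv)
  · rcases exists_factor_or_triangle (hxu.imp Eq.symm fun h => h.symm)
        (hyv.imp Eq.symm fun h => h.symm) hxy with
      ⟨F, hF, hu, hx, hy⟩ | ⟨S, hS, hu, hx, hy⟩
    · have hperp := perp_eq_self_of_isFactor hF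
      exact two_le_ncard_common_adj_of_snd_eq (.inl hF) hF.ncard_perp hx hy (hperp.ge hu) rfl
    · have hSc := card_compl_eq_three hS
      have hperp : perp (edgesIn Sᶜ) = edgesIn S := by
        rw [perp_edgesIn hSc, compl_compl]
      exact two_le_ncard_common_adj_of_snd_eq (.inr (isCompleteTriad_edgesIn hSc))
        (ncard_perp_edgesIn hSc) hx hy (hperp.ge hu) rfl

/-- If `α = (x,u)` and `β = (y,v)` are distinct non-collinear points of 𝓢 with
either `x = y, u ≠ v` or `x ≠ y, u = v`, then `|{α,β}^⊥| ≥ 2`. -/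
theorem statement2 (α β : NPoint) (h : α ≠ β) (hnc : ¬ NG.Adj α β)
    (hcase : (α.1.1 = β.1.1 ∧ α.1.2 ≠ β.1.2) ∨ (α.1.1 ≠ β.1.1 ∧ α.1.2 = β.1.2)) :
    2 ≤ {γ : NPoint | NG.Adj γ α ∧ NG.Adj γ β}.ncard :=
  statement2_general α β hcase
end

section
/- Let α and β be two distinct points of 𝕊 that both lie in P, or both lie in P'. Then α and β are non-collinear in 𝕊 and |{α,β}^⊥| ≥ 3 in 𝕊. -/
/-!
Every line of 𝕊 meeting `P ∪ P'` is a line `{x, (x,u), u'}`, which has exactly one point in `P`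
and one in `P'`; hence `P` and `P'` are cocliques. For distinct edges `x, y` every
`u ∈ {x,y}^⊥` gives a common neighbour `u'` of `x` and `y` (via the points `(x,u)` and `(y,u)`
of 𝓟), and `{x,y}^⊥` has three elements in the quadrangle: the edges disjoint from `x ∪ y` if
`x, y` meet, and `x, y` together with the complementary edge if they are disjoint.
-/

open Function

instance : Finite BPoint := by unfold BPoint NPoint; infer_instance

lemma inP_injective : Injective inP := Sum.inr_injective.comp Sum.inl_injective

lemma inP'_injective : Injective inP' := Sum.inr_injective.comp Sum.inr_injective

lemma mem_perp_pair_s10 {x y u : Edge} :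
    u ∈ perp {x, y} ↔ (x = u ∨ Disjoint x.1 u.1) ∧ (y = u ∨ Disjoint y.1 u.1) := by
  simp [perp]

lemma three_le_ncard_perp_pair {x y : Edge} (h : x ≠ y) : 3 ≤ (perp {x, y}).ncard := by
  have key : ∀ x y : Edge, x ≠ y → 3 ≤ (Finset.univ.filter fun u : Edge =>
      (x = u ∨ Disjoint x.1 u.1) ∧ (y = u ∨ Disjoint y.1 u.1)).card := by decide
  convert key x y h using 1
  rw [← Set.ncard_coe_finset]
  congr 1
  ext u
  simp [mem_perp_pair_s10]

lemma adj_inP_inP' (p : NPoint) : BG.Adj (inP p.1.1) (inP' p.1.2) :=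
  ⟨nofun, _, Or.inr ⟨p, rfl⟩, Or.inl rfl, Or.inr (Or.inr rfl)⟩

lemma eq_of_inP_mem_of_isBLine {L : Set BPoint} (hL : IsBLine L) {x y : Edge}
    (hx : inP x ∈ L) (hy : inP y ∈ L) : x = y := by
  rcases hL with ⟨L₀, -, rfl⟩ | ⟨p, rfl⟩
  · obtain ⟨q, -, hq⟩ := hx
    cases hq
  · have on_line : ∀ z : Edge, inP z ∈ ({inP p.1.1, inS p, inP' p.1.2} : Set BPoint) →
        z = p.1.1 := by
      rintro z (hz | hz | hz)
      · exact inP_injective hz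
      · cases hz
      · cases hz
    exact (on_line x hx).trans (on_line y hy).symm

lemma eq_of_inP'_mem_of_isBLine {L : Set BPoint} (hL : IsBLine L) {x y : Edge}
    (hx : inP' x ∈ L) (hy : inP' y ∈ L) : x = y := by
  rcases hL with ⟨L₀, -, rfl⟩ | ⟨p, rfl⟩
  · obtain ⟨q, -, hq⟩ := hx
    cases hq
  · have on_line : ∀ z : Edge, inP' z ∈ ({inP p.1.1, inS p, inP' p.1.2} : Set BPoint) →
        z = p.1.2 := by
      rintro z (hz | hz | hz)
      · cases hz
      · cases hz
      · exact inP'_injective hz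
    exact (on_line x hx).trans (on_line y hy).symm

lemma not_adj_inP (x y : Edge) : ¬ BG.Adj (inP x) (inP y) := fun ⟨hne, _, hL, hx, hy⟩ =>
  hne (congrArg inP (eq_of_inP_mem_of_isBLine hL hx hy))

lemma not_adj_inP' (x y : Edge) : ¬ BG.Adj (inP' x) (inP' y) := fun ⟨hne, _, hL, hx, hy⟩ =>
  hne (congrArg inP' (eq_of_inP'_mem_of_isBLine hL hx hy))

lemma three_le_ncard_common_adj {x y : Edge} (h : x ≠ y) {α β : BPoint} (f : Edge → BPoint)
    (hf : Injective f) (hadj : ∀ u ∈ perp {x, y}, BG.Adj (f u) α ∧ BG.Adj (f u) β) :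
    3 ≤ {γ : BPoint | BG.Adj γ α ∧ BG.Adj γ β}.ncard :=
  (three_le_ncard_perp_pair h).trans <|
    Set.ncard_le_ncard_of_injOn f hadj hf.injOn (Set.toFinite _)

/-- Two distinct points of 𝕊 both lying in `P`, or both lying in `P'`, are
non-collinear in 𝕊 and have at least 3 common neighbours in 𝕊. -/
theorem statement10 (x y : Edge) (h : x ≠ y) :
    (¬ BG.Adj (inP x) (inP y) ∧
      3 ≤ {γ : BPoint | BG.Adj γ (inP x) ∧ BG.Adj γ (inP y)}.ncard) ∧
    (¬ BG.Adj (inP' x) (inP' y) ∧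
      3 ≤ {γ : BPoint | BG.Adj γ (inP' x) ∧ BG.Adj γ (inP' y)}.ncard) := by
  refine ⟨⟨not_adj_inP x y, three_le_ncard_common_adj h inP' inP'_injective ?_⟩,
    ⟨not_adj_inP' x y, three_le_ncard_common_adj h inP inP_injective ?_⟩⟩
  · intro u hu
    obtain ⟨hxu, hyu⟩ := mem_perp_pair_s10.1 hu
    exact ⟨(adj_inP_inP' ⟨(x, u), hxu⟩).symm, (adj_inP_inP' ⟨(y, u), hyu⟩).symm⟩
  · intro u hu
    obtain ⟨hxu, hyu⟩ := mem_perp_pair_s10.1 hu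
    exact ⟨adj_inP_inP' ⟨(u, x), hxu.imp Eq.symm fun hd => hd.symm⟩,
      adj_inP_inP' ⟨(u, y), hyu.imp Eq.symm fun hd => hd.symm⟩⟩
end
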